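/- arXiv:1901.09739 — 3 statements merged into one kernel-verified Lean document; each statement's English description precedes it below -/
import Mathlib

section
/- Let Z be a standard real Gaussian, Y := log|Z|, a := E[Y], and W := Y - a. Then for every p ≥ 2 there exist universal constants c₁, c₂ > 0 (independent of p) such that c₁‖Θ‖_p ≤ ‖W‖_p ≤ c₂‖Θ‖_p, where Θ is a standard exponential random variable; explicitly one may take c₁ = 1/4 and c₂ = 6. -/
/-!
The substitution `x = ± exp t` turns the moments of `W = log |Z| - a` into
`∫ |t| ^ p g(t + a) dt`, where `g` is the density of `log |Z|`. This density is at most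
`2 √(2/π) e^{-|t|}` everywhere and at least `√(2/π) e^{-3/2} e^{t}` for `t ≤ 0`, as soon as
`a ∈ [-1, 0]`, so the `p`-th moment of `W` is squeezed between constant multiples of
`∫ |t| ^ p e^{-|t|} dt = 2 Γ(p + 1)`. That `a ∈ [-1, 0]` follows from
`log |x| ≤ (x ^ 2 - 1) / 2` with `E[Z ^ 2] = 1`, and from `g(t) ≤ √(2/π) e^{t}`.
-/

open MeasureTheory ProbabilityTheory Real Set

section ChangeOfVariables

variable {E : Type*} [NormedAddCommGroup E]

theorem integrable_comp_abs {f : ℝ → E} (hf : IntegrableOn f (Ioi 0)) :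
    Integrable fun x => f |x| := by
  have h_Ioi : IntegrableOn (fun x => f |x|) (Ioi 0) :=
    hf.congr_fun (fun x hx => by rw [abs_of_pos hx]) measurableSet_Ioi
  have h_Iic : IntegrableOn (fun x => f |x|) (Iic 0) := by
    have h_neg : MeasurableEmbedding fun x : ℝ => -x := (Homeomorph.neg ℝ).measurableEmbedding
    rw [← Measure.map_neg_eq_self (volume : Measure ℝ), h_neg.integrableOn_map_iff]
    simp_rw [Function.comp_def, abs_neg, neg_preimage, neg_Iic, neg_zero]
    exact Iff.mpr integrableOn_Ici_iff_integrableOn_Ioi h_Ioi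
  have := h_Iic.union h_Ioi
  rwa [Iic_union_Ioi, integrableOn_univ] at this

variable [NormedSpace ℝ E]

theorem integral_Ioi_zero_eq_integral_exp_smul (f : ℝ → E) :
    ∫ x in Ioi 0, f x = ∫ t, exp t • f (exp t) := by
  rw [← range_exp, ← image_univ, integral_image_eq_integral_abs_deriv_smul MeasurableSet.univ
    (fun x _ => (hasDerivAt_exp x).hasDerivWithinAt) exp_injective.injOn]
  simp [abs_of_pos (exp_pos _)]

theorem integrableOn_Ioi_zero_iff_integrable_exp_smul (f : ℝ → E) :
    IntegrableOn f (Ioi 0) ↔ Integrable fun t => exp t • f (exp t) := by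
  rw [← range_exp, ← image_univ, integrableOn_image_iff_integrableOn_abs_deriv_smul
    MeasurableSet.univ (fun x _ => (hasDerivAt_exp x).hasDerivWithinAt) exp_injective.injOn]
  simp [abs_of_pos (exp_pos _)]

end ChangeOfVariables

section GammaIntegrals

variable {p : ℝ}

theorem integral_Ioi_zero_abs_rpow_mul_exp_neg_abs (hp : -1 < p) :
    ∫ t in Ioi 0, |t| ^ p * exp (-|t|) = Gamma (p + 1) := by
  rw [Gamma_eq_integral (by linarith), add_sub_cancel_right]
  refine setIntegral_congr_fun measurableSet_Ioi fun t ht => ?_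
  rw [abs_of_pos ht, mul_comm]

theorem integrable_abs_rpow_mul_exp_neg_abs (hp : -1 < p) :
    Integrable fun t => |t| ^ p * exp (-|t|) := by
  refine integrable_comp_abs (f := fun t => t ^ p * exp (-t)) ?_
  have h := GammaIntegral_convergent (s := p + 1) (by linarith)
  rw [add_sub_cancel_right] at h
  exact h.congr_fun (fun t _ => mul_comm _ _) measurableSet_Ioi

theorem integral_abs_rpow_mul_exp_neg_abs (hp : -1 < p) :
    ∫ t, |t| ^ p * exp (-|t|) = 2 * Gamma (p + 1) := by
  simpa [integral_Ioi_zero_abs_rpow_mul_exp_neg_abs hp] using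
    integral_comp_abs (f := fun t => |t| ^ p * exp (-|t|))

theorem integral_Iic_zero_abs_rpow_mul_exp_neg_abs (hp : -1 < p) :
    ∫ t in Iic 0, |t| ^ p * exp (-|t|) = Gamma (p + 1) := by
  simpa [integral_Ioi_zero_abs_rpow_mul_exp_neg_abs hp] using
    integral_comp_neg_Iic 0 (fun t => |t| ^ p * exp (-|t|))

end GammaIntegrals

noncomputable def logAbsGaussianPDF (t : ℝ) : ℝ := √(2 / π) * exp (t - exp (2 * t) / 2)

theorem two_mul_exp_mul_gaussianPDFReal_exp (t : ℝ) :
    2 * exp t * gaussianPDFReal 0 1 (exp t) = logAbsGaussianPDF t := by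
  have h_sqrt : 2 * (√(2 * π))⁻¹ = √(2 / π) := by
    rw [sqrt_div' _ pi_pos.le, sqrt_mul zero_le_two π]
    field_simp
    rw [sq_sqrt zero_le_two]
  rw [logAbsGaussianPDF, ← h_sqrt, exp_sub, div_eq_mul_inv (exp t), ← exp_neg]
  simp only [gaussianPDFReal, NNReal.coe_one, mul_one, sub_zero]
  rw [← exp_nat_mul]
  ring_nf

theorem gaussianPDFReal_mul_comp_log_abs_eq_comp_abs (G : ℝ → ℝ) :
    (fun x => gaussianPDFReal 0 1 x * G (log |x|))
      = fun x => (fun u => gaussianPDFReal 0 1 u * G (log u)) |x| := by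
  simp only [gaussianPDFReal, sub_zero, sq_abs]

theorem integral_gaussianReal_comp_log_abs (G : ℝ → ℝ) :
    ∫ x, G (log |x|) ∂gaussianReal 0 1 = ∫ t, G t * logAbsGaussianPDF t := by
  rw [integral_gaussianReal_eq_integral_smul one_ne_zero]
  simp_rw [smul_eq_mul]
  rw [gaussianPDFReal_mul_comp_log_abs_eq_comp_abs,
    integral_comp_abs (f := fun u => gaussianPDFReal 0 1 u * G (log u)),
    integral_Ioi_zero_eq_integral_exp_smul, ← integral_const_mul]
  simp_rw [log_exp, smul_eq_mul, ← two_mul_exp_mul_gaussianPDFReal_exp]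
  congr 1 with t
  ring

theorem integrable_gaussianReal_comp_log_abs {G : ℝ → ℝ}
    (hG : Integrable fun t => G t * logAbsGaussianPDF t) :
    Integrable (fun x => G (log |x|)) (gaussianReal 0 1) := by
  rw [gaussianReal_of_var_ne_zero 0 one_ne_zero, integrable_withDensity_iff_integrable_smul'
    (measurable_gaussianPDF 0 1) (ae_of_all _ fun _ => gaussianPDF_lt_top)]
  simp_rw [toReal_gaussianPDF, smul_eq_mul]
  rw [gaussianPDFReal_mul_comp_log_abs_eq_comp_abs]
  refine integrable_comp_abs (f := fun u => gaussianPDFReal 0 1 u * G (log u)) ?_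
  rw [integrableOn_Ioi_zero_iff_integrable_exp_smul]
  refine (hG.const_mul 2⁻¹).congr (ae_of_all _ fun t => ?_)
  simp only [log_exp, smul_eq_mul, ← two_mul_exp_mul_gaussianPDFReal_exp]
  ring

section DensityBounds

theorem sqrt_two_div_pi_le_one : √(2 / π) ≤ 1 :=
  sqrt_le_one.mpr ((div_le_one pi_pos).mpr (by linarith [pi_gt_three]))

@[fun_prop]
theorem continuous_logAbsGaussianPDF : Continuous logAbsGaussianPDF := by
  unfold logAbsGaussianPDF
  fun_prop

theorem logAbsGaussianPDF_nonneg (t : ℝ) : 0 ≤ logAbsGaussianPDF t := by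
  unfold logAbsGaussianPDF
  positivity

theorem logAbsGaussianPDF_le_exp (t : ℝ) : logAbsGaussianPDF t ≤ √(2 / π) * exp t := by
  unfold logAbsGaussianPDF
  gcongr
  linarith [exp_pos (2 * t)]

theorem logAbsGaussianPDF_le_exp_neg (t : ℝ) :
    logAbsGaussianPDF t ≤ 2 * √(2 / π) * exp (-t - 1) := by
  -- the tangent line of `exp` at `log 2`
  have h_tangent : 2 * t - log 2 + 1 ≤ exp (2 * t) / 2 := by
    have := add_one_le_exp (2 * t - log 2)
    rw [exp_sub, exp_log two_pos] at this
    linarith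
  calc logAbsGaussianPDF t ≤ √(2 / π) * exp (log 2 + (-t - 1)) := by
        unfold logAbsGaussianPDF
        gcongr
        linarith
    _ = 2 * √(2 / π) * exp (-t - 1) := by
        rw [exp_add, exp_log two_pos]
        ring

theorem exp_le_logAbsGaussianPDF {t : ℝ} (ht : t ≤ 0) :
    √(2 / π) * exp (t - 1 / 2) ≤ logAbsGaussianPDF t := by
  unfold logAbsGaussianPDF
  gcongr
  linarith [exp_le_one_iff.mpr (by linarith : 2 * t ≤ 0)]

variable {a : ℝ} (ha : a ∈ Icc (-1) 0)
include ha

theorem logAbsGaussianPDF_add_le (t : ℝ) :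
    logAbsGaussianPDF (t + a) ≤ 2 * √(2 / π) * exp (-|t|) := by
  rcases le_total t 0 with ht | ht
  · calc logAbsGaussianPDF (t + a) ≤ √(2 / π) * exp (t + a) := logAbsGaussianPDF_le_exp _
      _ ≤ √(2 / π) * exp (-|t|) := by
        rw [abs_of_nonpos ht, neg_neg]
        gcongr
        linarith [ha.2]
      _ ≤ 2 * √(2 / π) * exp (-|t|) := by
        rw [mul_assoc]
        exact le_mul_of_one_le_left (by positivity) one_le_two
  · calc logAbsGaussianPDF (t + a) ≤ 2 * √(2 / π) * exp (-(t + a) - 1) :=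
          logAbsGaussianPDF_le_exp_neg _
      _ ≤ 2 * √(2 / π) * exp (-|t|) := by
        rw [abs_of_nonneg ht]
        gcongr
        linarith [ha.1]

theorem exp_le_logAbsGaussianPDF_add {t : ℝ} (ht : t ≤ 0) :
    √(2 / π) * exp (-3 / 2) * exp (-|t|) ≤ logAbsGaussianPDF (t + a) := by
  calc √(2 / π) * exp (-3 / 2) * exp (-|t|) = √(2 / π) * exp (t - 3 / 2) := by
        rw [abs_of_nonpos ht, neg_neg, mul_assoc, ← exp_add]
        ring_nf
    _ ≤ √(2 / π) * exp (t + a - 1 / 2) := by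
        gcongr ?_ * exp ?_
        linarith [ha.1]
    _ ≤ logAbsGaussianPDF (t + a) := exp_le_logAbsGaussianPDF (by linarith [ha.2])

end DensityBounds

section Moments

variable {a p : ℝ} (ha : a ∈ Icc (-1) 0)
include ha

theorem abs_rpow_mul_logAbsGaussianPDF_add_le (t : ℝ) :
    |t| ^ p * logAbsGaussianPDF (t + a) ≤ 2 * √(2 / π) * (|t| ^ p * exp (-|t|)) := by
  calc |t| ^ p * logAbsGaussianPDF (t + a) ≤ |t| ^ p * (2 * √(2 / π) * exp (-|t|)) := by
        gcongr
        exact logAbsGaussianPDF_add_le ha t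
    _ = 2 * √(2 / π) * (|t| ^ p * exp (-|t|)) := by ring

variable (hp : -1 < p)
include hp

theorem integrable_abs_rpow_mul_logAbsGaussianPDF_add :
    Integrable fun t => |t| ^ p * logAbsGaussianPDF (t + a) := by
  refine ((integrable_abs_rpow_mul_exp_neg_abs hp).const_mul (2 * √(2 / π))).mono' ?_
    (ae_of_all _ fun t => ?_)
  · exact (by fun_prop : Measurable fun t => |t| ^ p * logAbsGaussianPDF (t + a))
      |>.aestronglyMeasurable
  · rw [norm_of_nonneg (by positivity [logAbsGaussianPDF_nonneg (t + a)])]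
    exact abs_rpow_mul_logAbsGaussianPDF_add_le ha t

theorem integral_abs_sub_rpow_mul_logAbsGaussianPDF_le :
    ∫ t, |t - a| ^ p * logAbsGaussianPDF t ≤ 4 * √(2 / π) * Gamma (p + 1) := by
  rw [← integral_add_right_eq_self _ a]
  simp only [add_sub_cancel_right]
  calc ∫ t, |t| ^ p * logAbsGaussianPDF (t + a)
      ≤ ∫ t, 2 * √(2 / π) * (|t| ^ p * exp (-|t|)) :=
        integral_mono (integrable_abs_rpow_mul_logAbsGaussianPDF_add ha hp)
          ((integrable_abs_rpow_mul_exp_neg_abs hp).const_mul _)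
          (abs_rpow_mul_logAbsGaussianPDF_add_le ha)
    _ = 4 * √(2 / π) * Gamma (p + 1) := by
        rw [integral_const_mul, integral_abs_rpow_mul_exp_neg_abs hp]
        ring

theorem le_integral_abs_sub_rpow_mul_logAbsGaussianPDF :
    √(2 / π) * exp (-3 / 2) * Gamma (p + 1) ≤ ∫ t, |t - a| ^ p * logAbsGaussianPDF t := by
  rw [← integral_add_right_eq_self _ a]
  simp only [add_sub_cancel_right]
  have h_int := integrable_abs_rpow_mul_logAbsGaussianPDF_add ha hp
  calc √(2 / π) * exp (-3 / 2) * Gamma (p + 1)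
      = ∫ t in Iic 0, √(2 / π) * exp (-3 / 2) * (|t| ^ p * exp (-|t|)) := by
        rw [integral_const_mul, integral_Iic_zero_abs_rpow_mul_exp_neg_abs hp]
    _ ≤ ∫ t in Iic 0, |t| ^ p * logAbsGaussianPDF (t + a) := by
        refine setIntegral_mono_on
          ((integrable_abs_rpow_mul_exp_neg_abs hp).const_mul _).integrableOn h_int.integrableOn
          measurableSet_Iic fun t ht => ?_
        calc √(2 / π) * exp (-3 / 2) * (|t| ^ p * exp (-|t|))
            = |t| ^ p * (√(2 / π) * exp (-3 / 2) * exp (-|t|)) := by ring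
          _ ≤ |t| ^ p * logAbsGaussianPDF (t + a) := by
              gcongr
              exact exp_le_logAbsGaussianPDF_add ha ht
    _ ≤ ∫ t, |t| ^ p * logAbsGaussianPDF (t + a) :=
        setIntegral_le_integral h_int
          (ae_of_all _ fun t => by positivity [logAbsGaussianPDF_nonneg (t + a)])

end Moments

section Mean

theorem integrable_mul_logAbsGaussianPDF : Integrable fun t => t * logAbsGaussianPDF t := by
  refine (integrable_abs_rpow_mul_logAbsGaussianPDF_add (a := 0) ⟨by norm_num, le_rfl⟩
    (p := 1) (by norm_num)).mono' (by fun_prop) (ae_of_all _ fun t => ?_)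
  rw [norm_mul, norm_of_nonneg (logAbsGaussianPDF_nonneg t), rpow_one, add_zero, norm_eq_abs]

theorem integral_log_abs_gaussianReal_nonpos : ∫ x, log |x| ∂gaussianReal 0 1 ≤ 0 := by
  have h_log : Integrable (fun x => log |x|) (gaussianReal 0 1) :=
    integrable_gaussianReal_comp_log_abs (G := fun t => t) integrable_mul_logAbsGaussianPDF
  have h_sq : Integrable (fun x => x ^ 2) (gaussianReal 0 1) :=
    (memLp_id_gaussianReal 2).integrable_sq
  have h_second_moment : ∫ x, x ^ 2 ∂gaussianReal 0 1 = 1 := by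
    have := variance_eq_sub (memLp_id_gaussianReal 2 : MemLp id 2 (gaussianReal (0 : ℝ) 1))
    simpa [integral_id_gaussianReal] using this.symm
  have h_ne : ∀ᵐ x ∂gaussianReal 0 1, x ≠ 0 := by
    have := nullSingletonClass_gaussianReal (μ := 0) one_ne_zero
    exact compl_mem_ae_iff.mpr (measure_singleton 0)
  calc ∫ x, log |x| ∂gaussianReal 0 1 ≤ ∫ x, (x ^ 2 - 1) / 2 ∂gaussianReal 0 1 := by
        refine integral_mono_ae h_log ((h_sq.sub (integrable_const 1)).div_const 2) ?_
        filter_upwards [h_ne] with x hx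
        have := log_le_sub_one_of_pos (pow_pos (abs_pos.mpr hx) 2)
        rw [log_pow] at this
        push_cast at this
        rw [sq_abs] at this
        linarith
    _ = 0 := by
        rw [integral_div, integral_sub h_sq (integrable_const 1), h_second_moment]
        simp

theorem neg_one_le_integral_log_abs_gaussianReal : -1 ≤ ∫ x, log |x| ∂gaussianReal 0 1 := by
  have h_int := integrable_mul_logAbsGaussianPDF
  rw [integral_gaussianReal_comp_log_abs (fun t => t),
    ← intervalIntegral.integral_Iic_add_Ioi (b := 0) h_int.integrableOn h_int.integrableOn]
  have h_neg : -√(2 / π) ≤ ∫ t in Iic 0, t * logAbsGaussianPDF t := by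
    calc -√(2 / π) = ∫ t in Iic 0, -√(2 / π) * (|t| ^ (1 : ℝ) * exp (-|t|)) := by
          rw [integral_const_mul, integral_Iic_zero_abs_rpow_mul_exp_neg_abs (by norm_num)]
          norm_num [Gamma_two]
      _ ≤ ∫ t in Iic 0, t * logAbsGaussianPDF t := by
          refine setIntegral_mono_on
            ((integrable_abs_rpow_mul_exp_neg_abs (by norm_num)).const_mul _).integrableOn
            h_int.integrableOn measurableSet_Iic fun t (ht : t ≤ 0) => ?_
          calc -√(2 / π) * (|t| ^ (1 : ℝ) * exp (-|t|)) = t * (√(2 / π) * exp t) := by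
                rw [rpow_one, abs_of_nonpos ht, neg_neg]
                ring
            _ ≤ t * logAbsGaussianPDF t :=
                mul_le_mul_of_nonpos_left (logAbsGaussianPDF_le_exp t) ht
  have h_pos : 0 ≤ ∫ t in Ioi 0, t * logAbsGaussianPDF t :=
    setIntegral_nonneg measurableSet_Ioi fun t (ht : 0 < t) =>
      mul_nonneg ht.le (logAbsGaussianPDF_nonneg t)
  linarith [sqrt_two_div_pi_le_one]

end Mean

theorem rpow_mul_rpow_one_div {c X p : ℝ} (hc : 0 ≤ c) (hX : 0 ≤ X) (hp : 0 < p) :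
    (c ^ p * X) ^ (1 / p) = c * X ^ (1 / p) := by
  rw [mul_rpow (rpow_nonneg hc p) hX, ← rpow_mul hc, mul_one_div_cancel hp.ne', rpow_one]

theorem one_div_four_rpow_le {p : ℝ} (hp : 2 ≤ p) :
    (1 / 4 : ℝ) ^ p ≤ √(2 / π) * exp (-3 / 2) := by
  have h_sqrt : 1 / 2 ≤ √(2 / π) := by
    rw [le_sqrt (by norm_num) (by positivity), le_div_iff₀ pi_pos]
    nlinarith [pi_lt_four]
  have h_exp : 1 / 8 ≤ exp (-3 / 2) := by
    rw [show (-3 / 2 : ℝ) = -(3 / 2) by norm_num, exp_neg,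
      le_inv_comm₀ (by norm_num) (exp_pos _), one_div, inv_inv]
    calc exp (3 / 2) ≤ exp 1 ^ 2 := by rw [← exp_nat_mul]; gcongr; norm_num
      _ ≤ 8 := by nlinarith [exp_one_lt_d9, exp_pos 1]
  calc (1 / 4 : ℝ) ^ p ≤ (1 / 4) ^ (2 : ℝ) :=
        rpow_le_rpow_of_exponent_ge (by norm_num) (by norm_num) hp
    _ = 1 / 2 * (1 / 8) := by norm_num
    _ ≤ √(2 / π) * exp (-3 / 2) := by gcongr

theorem four_mul_sqrt_two_div_pi_le_six_rpow {p : ℝ} (hp : 2 ≤ p) :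
    4 * √(2 / π) ≤ (6 : ℝ) ^ p := by
  calc 4 * √(2 / π) ≤ (6 : ℝ) ^ (2 : ℝ) := by
        rw [show (6 : ℝ) ^ (2 : ℝ) = 36 by norm_num]
        linarith [sqrt_two_div_pi_le_one]
    _ ≤ (6 : ℝ) ^ p := rpow_le_rpow_of_exponent_le (by norm_num) hp

/-- For `W := log|Z| - a` with `Z` standard Gaussian and
`a := E[log|Z|]`, and `Θ` standard exponential (so `‖Θ‖_p = Γ(p+1)^{1/p}`),
one has `(1/4)‖Θ‖_p ≤ ‖W‖_p ≤ 6‖Θ‖_p` for all `p ≥ 2`. -/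
theorem centered_log_abs_gaussian_moment_comparison :
    ∃ c₁ c₂ : ℝ, c₁ = 1 / 4 ∧ c₂ = 6 ∧
      ∀ p : ℝ, 2 ≤ p →
        c₁ * Real.Gamma (p + 1) ^ (1 / p)
            ≤ (∫ z, |Real.log |z| - ∫ w, Real.log |w| ∂(gaussianReal 0 1)| ^ p
                  ∂(gaussianReal 0 1)) ^ (1 / p) ∧
        (∫ z, |Real.log |z| - ∫ w, Real.log |w| ∂(gaussianReal 0 1)| ^ p
              ∂(gaussianReal 0 1)) ^ (1 / p)
            ≤ c₂ * Real.Gamma (p + 1) ^ (1 / p) := by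
  refine ⟨1 / 4, 6, rfl, rfl, fun p hp => ?_⟩
  set a := ∫ w, log |w| ∂gaussianReal 0 1
  have ha : a ∈ Icc (-1) 0 :=
    ⟨neg_one_le_integral_log_abs_gaussianReal, integral_log_abs_gaussianReal_nonpos⟩
  have hp₀ : 0 < p := by linarith
  have hΓ : 0 ≤ Gamma (p + 1) := (Gamma_pos_of_pos (by linarith)).le
  rw [integral_gaussianReal_comp_log_abs fun t => |t - a| ^ p]
  constructor
  · rw [← rpow_mul_rpow_one_div (by norm_num) hΓ hp₀]
    gcongr
    calc (1 / 4 : ℝ) ^ p * Gamma (p + 1) ≤ √(2 / π) * exp (-3 / 2) * Gamma (p + 1) := by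
          gcongr
          exact one_div_four_rpow_le hp
      _ ≤ ∫ t, |t - a| ^ p * logAbsGaussianPDF t :=
          le_integral_abs_sub_rpow_mul_logAbsGaussianPDF ha (by linarith)
  · rw [← rpow_mul_rpow_one_div (by norm_num) hΓ hp₀]
    refine rpow_le_rpow (integral_nonneg fun t => by positivity [logAbsGaussianPDF_nonneg t]) ?_
      (by positivity)
    calc ∫ t, |t - a| ^ p * logAbsGaussianPDF t ≤ 4 * √(2 / π) * Gamma (p + 1) :=
          integral_abs_sub_rpow_mul_logAbsGaussianPDF_le ha (by linarith)
      _ ≤ (6 : ℝ) ^ p * Gamma (p + 1) := by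
          gcongr
          exact four_mul_sqrt_two_div_pi_le_six_rpow hp
end

section
/- Let Z₁,…,Zₙ be independent standard real Gaussians, a := E[log|Z₁|], and θ ∈ S^{n-1}. Then there exist absolute constants C, C′ > 0 such that for all t > 0, P( |Σ_{i=1}^n θ_i log|Z_i| − a Σ_{i=1}^n θ_i| ≥ t ) ≤ C′ exp( −C · min{ t/‖θ‖_∞ , t² } ). -/
open Real MeasureTheory ProbabilityTheory Set
open scoped NNReal

/-!
The centred variable `Y = log |Z| - a` has an exponential moment `E exp (|Y| / 2) < ∞`: the only
difficulty is near `Z = 0`, where it amounts to the integrability of `|x|^(-1/2) exp (-x² / 2)`.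
Such a variable satisfies Bernstein's condition `E exp (s Y) ≤ exp (K s²)` for
`|s| ≤ 1/4`. For independent copies, `θ_i Y_i` satisfies it with variance proxy `θ_i² K` for
`|s| ≤ 1 / (4 ‖θ‖_∞)`; these proxies add up to `K` because `θ` is a unit vector, and the Chernoff
bound optimised over `s` in this range gives the mixed exponential/Gaussian tail.
-/

namespace Real

lemma exp_le_one_add_add_sq_mul_exp_abs (y : ℝ) : exp y ≤ 1 + y + y ^ 2 * exp |y| := by
  rcases le_or_gt |y| 1 with hy | hy
  · have := (abs_le.1 (abs_exp_sub_one_sub_id_le hy)).2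
    nlinarith [one_le_exp (abs_nonneg y), sq_nonneg y]
  rcases le_or_gt 0 y with hy0 | hy0
  · rw [abs_of_nonneg hy0] at hy ⊢
    nlinarith [mul_nonneg (sub_nonneg.2 (one_le_pow₀ hy.le : 1 ≤ y ^ 2)) (exp_pos y).le]
  · rw [abs_of_neg hy0] at hy ⊢
    nlinarith [exp_le_one_iff.2 hy0.le,
      mul_le_mul_of_nonneg_left (one_le_exp (neg_nonneg.2 hy0.le)) (sq_nonneg y)]

lemma sq_le_mul_exp_mul_abs {δ : ℝ} (hδ : 0 < δ) (y : ℝ) :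
    y ^ 2 ≤ (2 / δ) ^ 2 * exp (δ * |y|) := by
  have hu : δ * |y| / 2 ≤ exp (δ * |y| / 2) := by linarith [add_one_le_exp (δ * |y| / 2)]
  calc y ^ 2 = (2 / δ) ^ 2 * (δ * |y| / 2) ^ 2 := by rw [← sq_abs]; field_simp
    _ ≤ (2 / δ) ^ 2 * exp (δ * |y| / 2) ^ 2 := by gcongr
    _ = (2 / δ) ^ 2 * exp (δ * |y|) := by rw [sq (exp _), ← exp_add, add_halves]

end Real

theorem integrable_comp_abs_of_integrableOn_Ioi {E : Type*} [NormedAddCommGroup E] {f : ℝ → E}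
    (hf : IntegrableOn f (Ioi 0)) : Integrable fun x ↦ f |x| := by
  have hpos : IntegrableOn (fun x ↦ f |x|) (Ioi 0) :=
    hf.congr_fun (fun x hx ↦ by rw [abs_of_pos hx]) measurableSet_Ioi
  have hneg : IntegrableOn (fun x ↦ f |x|) (Iic 0) := by
    have m : MeasurableEmbedding fun x : ℝ ↦ -x := (Homeomorph.neg ℝ).measurableEmbedding
    rw [← Measure.map_neg_eq_self (volume : Measure ℝ), m.integrableOn_map_iff]
    simpa [Function.comp_def, integrableOn_Ici_iff_integrableOn_Ioi] using hpos
  rw [← integrableOn_univ, ← Iic_union_Ioi (a := (0 : ℝ))]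
  exact hneg.union hpos

theorem integrable_abs_rpow_mul_exp_neg_mul_sq {b s : ℝ} (hb : 0 < b) (hs : -1 < s) :
    Integrable fun x : ℝ ↦ |x| ^ s * exp (-b * x ^ 2) := by
  simpa only [sq_abs] using
    integrable_comp_abs_of_integrableOn_Ioi (integrableOn_rpow_mul_exp_neg_mul_sq hb hs)

namespace ProbabilityTheory

theorem integrable_abs_rpow_gaussianReal {v : ℝ≥0} (hv : v ≠ 0) {s : ℝ} (hs : -1 < s) :
    Integrable (fun x ↦ |x| ^ s) (gaussianReal 0 v) := by
  rw [gaussianReal_of_var_ne_zero 0 hv, integrable_withDensity_iff_integrable_smul'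
    (measurable_gaussianPDF 0 v) (.of_forall fun _ ↦ gaussianPDF_lt_top)]
  have hb : 0 < (2 * v : ℝ)⁻¹ := by positivity
  refine ((integrable_abs_rpow_mul_exp_neg_mul_sq hb hs).const_mul (√(2 * π * v))⁻¹).congr
    (.of_forall fun x ↦ ?_)
  simp only [toReal_gaussianPDF, gaussianPDFReal, smul_eq_mul, sub_zero]
  ring_nf

theorem integrable_exp_mul_abs_log_abs_gaussianReal {v : ℝ≥0} (hv : v ≠ 0) {c : ℝ}
    (hc : |c| < 1) : Integrable (fun x ↦ exp (c * |log (|x|)|)) (gaussianReal 0 v) := by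
  have hmaj := ((integrable_const 1).add (integrable_abs_rpow_gaussianReal hv (s := c)
    (by linarith [abs_lt.1 hc]))).add
    (integrable_abs_rpow_gaussianReal hv (s := -c) (by linarith [abs_lt.1 hc]))
  refine hmaj.mono' ((measurable_log.comp measurable_abs).abs.const_mul c).exp.aestronglyMeasurable
    (.of_forall fun x ↦ ?_)
  rw [norm_of_nonneg (exp_pos _).le]
  rcases eq_or_ne x 0 with rfl | hx
  · simp only [Pi.add_apply, abs_zero, log_zero, mul_zero, exp_zero]
    linarith [rpow_nonneg le_rfl c, rpow_nonneg (le_refl (0 : ℝ)) (-c)]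
  simp only [Pi.add_apply, rpow_def_of_pos (abs_pos.2 hx), mul_comm (log |x|)]
  rcases abs_cases (log |x|) with ⟨h, -⟩ | ⟨h, -⟩
  · rw [h]; linarith [exp_pos (-c * log |x|)]
  · rw [h, mul_neg, ← neg_mul]; linarith [exp_pos (c * log |x|)]

variable {Ω : Type*} {m : MeasurableSpace Ω} {μ : Measure Ω} {X : Ω → ℝ} {c v L : ℝ}

lemma integrable_of_integrable_exp_mul_abs (hX : AEStronglyMeasurable X μ) (hc : 0 < c)
    (h : Integrable (fun ω ↦ exp (c * |X ω|)) μ) : Integrable X μ := by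
  refine (h.const_mul c⁻¹).mono' hX (.of_forall fun ω ↦ ?_)
  rw [norm_eq_abs, le_inv_mul_iff₀ hc]
  linarith [add_one_le_exp (c * |X ω|)]

lemma integrable_exp_mul_abs_sub_const (hX : AEMeasurable X μ) (hc : 0 ≤ c)
    (h : Integrable (fun ω ↦ exp (c * |X ω|)) μ) (a : ℝ) :
    Integrable (fun ω ↦ exp (c * |X ω - a|)) μ := by
  refine (h.const_mul (exp (c * |a|))).mono' ?_ (.of_forall fun ω ↦ ?_)
  · exact ((hX.sub_const a).abs.const_mul c).exp.aestronglyMeasurable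
  · rw [norm_of_nonneg (exp_pos _).le, ← exp_add, exp_le_exp]
    nlinarith [abs_sub (X ω) a]

/-- Bernstein's condition: on `[-L, L]` the moment generating function is bounded by that of a
centred Gaussian of variance `2 v`. -/
structure HasSubexponentialMGF (X : Ω → ℝ) (v L : ℝ) (μ : Measure Ω) : Prop where
  integrable_exp_mul : ∀ s, |s| ≤ L → Integrable (fun ω ↦ exp (s * X ω)) μ
  mgf_le : ∀ s, |s| ≤ L → mgf X μ s ≤ exp (v * s ^ 2)

namespace HasSubexponentialMGF

lemma of_integrable_exp_mul_abs [IsProbabilityMeasure μ] (hX : AEMeasurable X μ)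
    (hc : 0 < c) (h : Integrable (fun ω ↦ exp (c * |X ω|)) μ) (hmean : μ[X] = 0) :
    HasSubexponentialMGF X ((4 / c) ^ 2 * ∫ ω, exp (c * |X ω|) ∂μ) (c / 2) μ := by
  have hexp_le : ∀ s, |s| ≤ c / 2 → ∀ ω, exp (s * X ω) ≤ exp (c / 2 * |X ω|) := by
    intro s hs ω
    rw [exp_le_exp]
    calc s * X ω ≤ |s| * |X ω| := by rw [← abs_mul]; exact le_abs_self _
      _ ≤ c / 2 * |X ω| := by gcongr
  have hint : ∀ s, |s| ≤ c / 2 → Integrable (fun ω ↦ exp (s * X ω)) μ := fun s hs ↦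
    (h.mono' (hX.const_mul s).exp.aestronglyMeasurable (.of_forall fun ω ↦ by
      rw [norm_of_nonneg (exp_pos _).le]
      refine (hexp_le s hs ω).trans (exp_le_exp.2 ?_)
      nlinarith [abs_nonneg (X ω)]))
  refine ⟨hint, fun s hs ↦ ?_⟩
  have hpt : ∀ ω, exp (s * X ω) ≤ 1 + s * X ω + s ^ 2 * ((4 / c) ^ 2 * exp (c * |X ω|)) := by
    intro ω
    refine (exp_le_one_add_add_sq_mul_exp_abs _).trans ?_
    have hsq := sq_le_mul_exp_mul_abs (half_pos hc) (X ω)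
    have habs : exp |s * X ω| ≤ exp (c / 2 * |X ω|) := by
      rw [exp_le_exp, abs_mul]; gcongr
    calc 1 + s * X ω + (s * X ω) ^ 2 * exp |s * X ω|
        ≤ 1 + s * X ω
            + s ^ 2 * ((2 / (c / 2)) ^ 2 * exp (c / 2 * |X ω|) * exp (c / 2 * |X ω|)) := by
          rw [mul_pow, mul_assoc]; gcongr
      _ = _ := by rw [mul_assoc, ← exp_add, ← add_mul, add_halves]; ring
  set K := (4 / c) ^ 2 * ∫ ω, exp (c * |X ω|) ∂μ
  have hXint := integrable_of_integrable_exp_mul_abs hX.aestronglyMeasurable hc h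
  have hlin : Integrable (fun ω ↦ s * X ω) μ := hXint.const_mul s
  have haff : Integrable (fun ω ↦ 1 + s * X ω) μ := (integrable_const 1).add hlin
  have hquad : Integrable (fun ω ↦ s ^ 2 * ((4 / c) ^ 2 * exp (c * |X ω|))) μ :=
    (h.const_mul _).const_mul _
  calc mgf X μ s ≤ ∫ ω, (1 + s * X ω + s ^ 2 * ((4 / c) ^ 2 * exp (c * |X ω|))) ∂μ :=
        integral_mono (hint s hs) (haff.add hquad) hpt
    _ = 1 + K * s ^ 2 := by
        rw [integral_add haff hquad,
          integral_add (integrable_const 1) hlin,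
          integral_const_mul, integral_const_mul, integral_const_mul, hmean]
        simp only [integral_const, probReal_univ, smul_eq_mul, K]
        ring
    _ ≤ exp (K * s ^ 2) := by linarith [add_one_le_exp (K * s ^ 2)]

lemma congr_identDistrib {Ω' : Type*} {m' : MeasurableSpace Ω'} {μ' : Measure Ω'} {X' : Ω' → ℝ}
    (h : HasSubexponentialMGF X' v L μ') (hident : IdentDistrib X X' μ μ') :
    HasSubexponentialMGF X v L μ where
  integrable_exp_mul s hs :=
    (hident.comp (measurable_const_mul s).exp).integrable_iff.2 (h.integrable_exp_mul s hs)
  mgf_le s hs := mgf_congr_of_identDistrib X X' hident s ▸ h.mgf_le s hs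

lemma const_mul (h : HasSubexponentialMGF X v L μ) (r : ℝ) {L' : ℝ} (hL' : |r| * L' ≤ L) :
    HasSubexponentialMGF (fun ω ↦ r * X ω) (r ^ 2 * v) L' μ := by
  have hrs : ∀ s, |s| ≤ L' → |r * s| ≤ L := fun s hs ↦ by
    rw [abs_mul]; exact (mul_le_mul_of_nonneg_left hs (abs_nonneg r)).trans hL'
  refine ⟨fun s hs ↦ ?_, fun s hs ↦ ?_⟩
  · simpa only [← mul_assoc, mul_comm s r] using h.integrable_exp_mul _ (hrs s hs)
  · rw [mgf_const_mul]
    convert h.mgf_le _ (hrs s hs) using 2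
    ring

lemma neg (h : HasSubexponentialMGF X v L μ) : HasSubexponentialMGF (-X) v L μ := by
  refine ⟨fun s hs ↦ ?_, fun s hs ↦ ?_⟩
  · simpa only [Pi.neg_apply, mul_neg, neg_mul] using h.integrable_exp_mul (-s) (by rwa [abs_neg])
  · rw [mgf_neg, ← neg_sq s]
    exact h.mgf_le (-s) (by rwa [abs_neg])

lemma sum_of_iIndepFun {ι : Type*} {X : ι → Ω → ℝ} (h_indep : iIndepFun X μ)
    (h_meas : ∀ i, AEMeasurable (X i) μ) {v : ι → ℝ} (s : Finset ι)
    (h : ∀ i ∈ s, HasSubexponentialMGF (X i) (v i) L μ) :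
    HasSubexponentialMGF (∑ i ∈ s, X i) (∑ i ∈ s, v i) L μ := by
  have : IsProbabilityMeasure μ := h_indep.isProbabilityMeasure
  have hmgf : ∀ t, |t| ≤ L → mgf (∑ i ∈ s, X i) μ t ≤ exp ((∑ i ∈ s, v i) * t ^ 2) := by
    intro t ht
    rw [h_indep.mgf_sum₀ h_meas, Finset.sum_mul, exp_sum]
    exact Finset.prod_le_prod (fun i _ ↦ mgf_nonneg) fun i hi ↦ (h i hi).mgf_le t ht
  refine ⟨fun t ht ↦ ?_, hmgf⟩
  refine Integrable.of_integral_ne_zero ?_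
  change mgf (∑ i ∈ s, X i) μ t ≠ 0
  rw [h_indep.mgf_sum₀ h_meas]
  exact Finset.prod_ne_zero_iff.2 fun i hi ↦ (mgf_pos ((h i hi).integrable_exp_mul t ht)).ne'

lemma measureReal_ge_le [IsFiniteMeasure μ] (h : HasSubexponentialMGF X v L μ) (hv : 0 < v)
    (hL : 0 ≤ L) {t : ℝ} (ht : 0 ≤ t) :
    μ.real {ω | t ≤ X ω} ≤ exp (-min (L * t / 2) (t ^ 2 / (4 * v))) := by
  set s := min L (t / (2 * v))
  have hs0 : 0 ≤ s := le_min hL (by positivity)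
  have hsL : |s| ≤ L := by rw [abs_of_nonneg hs0]; exact min_le_left _ _
  have hvs : v * s ≤ t / 2 := by
    calc v * s ≤ v * (t / (2 * v)) := by gcongr; exact min_le_right _ _
      _ = t / 2 := by field_simp
  calc μ.real {ω | t ≤ X ω} ≤ exp (-s * t) * mgf X μ s :=
        measure_ge_le_exp_mul_mgf t hs0 (h.integrable_exp_mul s hsL)
    _ ≤ exp (-s * t) * exp (v * s ^ 2) := by gcongr; exact h.mgf_le s hsL
    _ ≤ exp (-(s * t / 2)) := by
        rw [← exp_add, exp_le_exp]; nlinarith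
    _ = exp (-min (L * t / 2) (t ^ 2 / (4 * v))) := by
        congr 2
        rw [min_mul_of_nonneg _ _ ht, ← min_div_div_right zero_le_two]
        congr 1
        field_simp; ring

lemma measureReal_abs_ge_le [IsFiniteMeasure μ] (h : HasSubexponentialMGF X v L μ) (hv : 0 < v)
    (hL : 0 ≤ L) {t : ℝ} (ht : 0 ≤ t) :
    μ.real {ω | t ≤ |X ω|} ≤ 2 * exp (-min (L * t / 2) (t ^ 2 / (4 * v))) := by
  have hsub : {ω | t ≤ |X ω|} ⊆ {ω | t ≤ X ω} ∪ {ω | t ≤ (-X) ω} :=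
    fun ω (hω : t ≤ |X ω|) ↦ le_abs.1 hω
  calc μ.real {ω | t ≤ |X ω|} ≤ μ.real {ω | t ≤ X ω} + μ.real {ω | t ≤ (-X) ω} :=
        (measureReal_mono hsub).trans (measureReal_union_le _ _)
    _ ≤ _ := by linarith [h.measureReal_ge_le hv hL ht, h.neg.measureReal_ge_le hv hL ht]

lemma sum_mul_comp_of_iIndepFun {ι β : Type*} [Fintype ι] {mβ : MeasurableSpace β}
    {ν : Measure β} {Y : β → ℝ} (hY : HasSubexponentialMGF Y v L ν) (hYm : Measurable Y)
    (hL : 0 ≤ L) {Z : ι → Ω → β} (h_indep : iIndepFun Z μ) (hZ : ∀ i, HasLaw (Z i) ν μ)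
    (θ : ι → ℝ) :
    HasSubexponentialMGF (fun ω ↦ ∑ i, θ i * Y (Z i ω)) ((∑ i, θ i ^ 2) * v)
      (L / ⨆ i, |θ i|) μ := by
  have hθ : ∀ i, |θ i| * (L / ⨆ j, |θ j|) ≤ L := fun i ↦
    calc |θ i| * (L / ⨆ j, |θ j|) = L * (|θ i| / ⨆ j, |θ j|) := by ring
      _ ≤ L * 1 := by
        gcongr
        exact div_le_one_of_le₀ (le_ciSup (f := fun j ↦ |θ j|) (finite_range _).bddAbove i)
          (Real.iSup_nonneg fun j ↦ abs_nonneg (θ j))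
      _ = L := mul_one L
  have hg : ∀ i, Measurable fun x ↦ θ i * Y x := fun i ↦ hYm.const_mul (θ i)
  convert sum_of_iIndepFun (h_indep.comp _ hg)
    (fun i ↦ (hg i).comp_aemeasurable (hZ i).aemeasurable) Finset.univ
    fun i _ ↦ (hY.congr_identDistrib (((hZ i).identDistrib .id).comp hYm)).const_mul (θ i) (hθ i)
    using 1
  · ext ω; simp only [Finset.sum_apply, Function.comp_apply]
  · rw [Finset.sum_mul]

end HasSubexponentialMGF

lemma hasSubexponentialMGF_log_abs_sub_integral_gaussianReal :
    ∃ K > 0, HasSubexponentialMGF (fun x ↦ log |x| - ∫ z, log |z| ∂gaussianReal 0 1) K (1 / 4)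
      (gaussianReal 0 1) := by
  set a := ∫ z, log |z| ∂gaussianReal 0 1
  have hlog : AEMeasurable (fun x : ℝ ↦ log |x|) (gaussianReal 0 1) :=
    (measurable_log.comp measurable_abs).aemeasurable
  have hexp := integrable_exp_mul_abs_log_abs_gaussianReal one_ne_zero (c := 1 / 2)
    (by rw [abs_of_pos (by norm_num)]; norm_num)
  have hexp_sub := integrable_exp_mul_abs_sub_const hlog (by norm_num) hexp a
  have hmean : ∫ x, (log |x| - a) ∂gaussianReal 0 1 = 0 := by
    rw [integral_sub (integrable_of_integrable_exp_mul_abs hlog.aestronglyMeasurable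
      (by norm_num) hexp) (integrable_const a)]
    simp [a]
  refine ⟨(4 / (1 / 2)) ^ 2 * ∫ x, exp (1 / 2 * |log |x| - a|) ∂gaussianReal 0 1,
    mul_pos (by norm_num) (integral_exp_pos hexp_sub), ?_⟩
  convert HasSubexponentialMGF.of_integrable_exp_mul_abs (hlog.sub_const a) (by norm_num)
    hexp_sub hmean using 1
  norm_num

end ProbabilityTheory

/-- There are absolute constants `C, C′ > 0` such that for
independent standard real Gaussians `Z₁,…,Zₙ`, `a := E[log|Z₁|]`, and any
unit vector `θ`, `P(|Σ θ_i log|Z_i| - a Σ θ_i| ≥ t) ≤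
C′ exp(-C min{t/‖θ‖_∞, t²})` for all `t > 0`. -/
theorem gaussian_log_linear_combination_tail :
    ∃ C C' : ℝ, 0 < C ∧ 0 < C' ∧
      ∀ (Ω : Type) [MeasureSpace Ω], IsProbabilityMeasure (ℙ : Measure Ω) →
      ∀ (n : ℕ) (Z : Fin n → Ω → ℝ),
        iIndepFun Z ℙ →
        (∀ i, (ℙ : Measure Ω).map (Z i) = gaussianReal 0 1) →
        ∀ θ : Fin n → ℝ, (∑ i, θ i ^ 2) = 1 →
        ∀ t : ℝ, 0 < t →
          (ℙ {ω | t ≤ |(∑ i, θ i * Real.log |Z i ω|)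
              - (∫ z, Real.log |z| ∂(gaussianReal 0 1)) * ∑ i, θ i|}).toReal
            ≤ C' * Real.exp (-(C * min (t / (⨆ i, |θ i|)) (t ^ 2))) := by
  obtain ⟨K, hK, hY⟩ := hasSubexponentialMGF_log_abs_sub_integral_gaussianReal
  refine ⟨min (1 / 8) (1 / (4 * K)), 2, by positivity, two_pos, ?_⟩
  intro Ω _ _ n Z hindep hmap θ hθ t ht
  have hZ : ∀ i, HasLaw (Z i) (gaussianReal 0 1) ℙ := fun i ↦
    ⟨.of_map_ne_zero (hmap i ▸ IsProbabilityMeasure.ne_zero _), hmap i⟩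
  have hS := hY.sum_mul_comp_of_iIndepFun (by fun_prop) (by norm_num) hindep hZ θ
  rw [hθ, one_mul] at hS
  set M := ⨆ i, |θ i|
  have hM : 0 ≤ M := Real.iSup_nonneg fun i ↦ abs_nonneg (θ i)
  calc (ℙ {ω | t ≤ |(∑ i, θ i * log |Z i ω|) - (∫ z, log |z| ∂gaussianReal 0 1) * ∑ i, θ i|}).toReal
      = (ℙ : Measure Ω).real
          {ω | t ≤ |∑ i, θ i * (log |Z i ω| - ∫ z, log |z| ∂gaussianReal 0 1)|} := by
        simp only [mul_sub, Finset.sum_sub_distrib, ← Finset.sum_mul, mul_comm]; rfl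
    _ ≤ 2 * exp (-min (1 / 4 / M * t / 2) (t ^ 2 / (4 * K))) :=
        hS.measureReal_abs_ge_le hK (by positivity) ht.le
    _ ≤ 2 * exp (-(min (1 / 8) (1 / (4 * K)) * min (t / M) (t ^ 2))) := by
        gcongr
        refine le_min ?_ ?_
        · calc _ ≤ 1 / 8 * (t / M) := by gcongr <;> exact min_le_left _ _
            _ = _ := by ring
        · calc _ ≤ 1 / (4 * K) * t ^ 2 := by gcongr <;> exact min_le_right _ _
            _ = _ := by ring
end

section
/- Let Z be a standard real Gaussian and X := max{|Z|, |Z|^{-1}}. Then E[ log log(eX) ] ≤ sqrt(8/π). -/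
/-!
With `t = |Z|` we have `log log (e X) = log (1 + |log t|) ≤ |log t| ≤ Q Z + |Z|`, where `Q` is
`-log |·|` on `[-1, 1]` and `0` elsewhere. The standard Gaussian density is at most `1 / √(2π)`
and `∫ Q = 2`, so `E[Q Z] ≤ 2 / √(2π)`; also `E|Z| = √(2/π) = 2 / √(2π)`. The sum is
`4 / √(2π) = √(8/π)`.
-/

open MeasureTheory ProbabilityTheory Real Set
open scoped NNReal ENNReal

lemma gaussianPDFReal_le (μ : ℝ) (v : ℝ≥0) (x : ℝ) :
    gaussianPDFReal μ v x ≤ (√(2 * π * v))⁻¹ := by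
  rw [gaussianPDFReal]
  refine mul_le_of_le_one_right (by positivity) (exp_le_one_iff.2 ?_)
  exact div_nonpos_of_nonpos_of_nonneg (neg_nonpos.2 (sq_nonneg _)) (by positivity)

lemma gaussianReal_le_smul_volume (μ : ℝ) {v : ℝ≥0} (hv : v ≠ 0) :
    gaussianReal μ v ≤ ENNReal.ofReal (√(2 * π * v))⁻¹ • volume := by
  rw [gaussianReal_of_var_ne_zero μ hv, ← withDensity_const]
  exact withDensity_mono
    (ae_of_all _ fun x => ENNReal.ofReal_le_ofReal (gaussianPDFReal_le μ v x))

lemma integrable_gaussianReal_of_integrable {E : Type*} [NormedAddCommGroup E] {f : ℝ → E}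
    (hf : Integrable f) (μ : ℝ) {v : ℝ≥0} (hv : v ≠ 0) : Integrable f (gaussianReal μ v) :=
  (hf.smul_measure ENNReal.ofReal_ne_top).mono_measure (gaussianReal_le_smul_volume μ hv)

lemma integral_gaussianReal_le_of_nonneg {f : ℝ → ℝ} (hf_nonneg : 0 ≤ f) (hf : Integrable f)
    (μ : ℝ) {v : ℝ≥0} (hv : v ≠ 0) :
    ∫ x, f x ∂gaussianReal μ v ≤ (√(2 * π * v))⁻¹ * ∫ x, f x := by
  calc ∫ x, f x ∂gaussianReal μ v
      ≤ ∫ x, f x ∂(ENNReal.ofReal (√(2 * π * v))⁻¹ • volume) :=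
        integral_mono_measure (gaussianReal_le_smul_volume μ hv) (ae_of_all _ hf_nonneg)
          (hf.smul_measure ENNReal.ofReal_ne_top)
    _ = (√(2 * π * v))⁻¹ * ∫ x, f x := by
      rw [integral_smul_measure, ENNReal.toReal_ofReal (by positivity), smul_eq_mul]

lemma integral_Ioi_mul_exp_neg_mul_sq {b : ℝ} (hb : 0 < b) :
    ∫ x in Ioi (0 : ℝ), x * exp (-b * x ^ 2) = (2 * b)⁻¹ := by
  apply Complex.ofReal_injective
  rw [← integral_complex_ofReal]
  push_cast
  exact integral_mul_cexp_neg_mul_sq (by simpa using hb)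

lemma integral_abs_gaussianReal_zero {v : ℝ≥0} (hv : v ≠ 0) :
    ∫ x, |x| ∂gaussianReal 0 v = √(2 * v / π) := by
  set b : ℝ := (2 * v)⁻¹
  calc ∫ x, |x| ∂gaussianReal 0 v
      = ∫ x, (√(2 * π * v))⁻¹ * (fun t => t * exp (-b * t ^ 2)) |x| := by
        rw [integral_gaussianReal_eq_integral_smul hv]
        congr with x
        simp only [gaussianPDFReal, sub_zero, smul_eq_mul, sq_abs, b]
        ring_nf
    _ = (√(2 * π * v))⁻¹ * (2 * (2 * b)⁻¹) := by
        rw [integral_const_mul, integral_comp_abs (f := fun t => t * exp (-b * t ^ 2)),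
          integral_Ioi_mul_exp_neg_mul_sq (by positivity)]
    _ = √(2 * v / π) := by
        rw [show 2 * (v : ℝ) / π = (2 * v) ^ 2 / (2 * π * v) by field_simp,
          sqrt_div' _ (by positivity), sqrt_sq (by positivity)]
        simp only [b]
        field_simp

lemma log_exp_one_mul_max_inv {t : ℝ} (ht : 0 < t) :
    log (exp 1 * max t t⁻¹) = 1 + |log t| := by
  rw [log_mul (exp_ne_zero 1) (by positivity), log_exp, abs_eq_max_neg, ← log_inv]
  congr 1
  rcases le_total t t⁻¹ with h | h
  · rw [max_eq_right h, max_eq_right (log_le_log ht h)]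
  · rw [max_eq_left h, max_eq_left (log_le_log (by positivity) h)]

lemma log_log_exp_one_mul_max_inv_nonneg {t : ℝ} (ht : 0 ≤ t) :
    0 ≤ log (log (exp 1 * max t t⁻¹)) := by
  rcases ht.eq_or_lt with rfl | ht
  · simp
  · rw [log_exp_one_mul_max_inv ht]
    exact log_nonneg (le_add_of_nonneg_right (abs_nonneg _))

lemma log_log_exp_one_mul_max_inv_le {t : ℝ} (ht : 0 ≤ t) :
    log (log (exp 1 * max t t⁻¹)) ≤ |log t| := by
  rcases ht.eq_or_lt with rfl | ht
  · simp
  · rw [log_exp_one_mul_max_inv ht]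
    linarith [log_le_sub_one_of_pos (show 0 < 1 + |log t| by positivity)]

lemma abs_log_le_indicator_neg_log_add_abs (x : ℝ) :
    |log x| ≤ (Icc (-1) 1).indicator (fun y => -log y) x + |x| := by
  by_cases hx : x ∈ Icc (-1) 1
  · rw [indicator_of_mem hx, abs_of_nonpos, ← log_abs]
    · linarith [abs_nonneg x]
    · rw [← log_abs]
      exact log_nonpos (abs_nonneg x) (abs_le.2 hx)
  · have hx_abs : 1 < |x| := by
      rw [mem_Icc, not_and_or, not_le, not_le] at hx
      rcases hx with hx | hx
      · exact lt_abs.2 (Or.inr (by linarith))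
      · exact lt_abs.2 (Or.inl hx)
    rw [indicator_of_notMem hx, zero_add, ← log_abs, abs_of_nonneg (log_nonneg hx_abs.le)]
    exact log_le_self (abs_nonneg x)

lemma indicator_neg_log_nonneg : 0 ≤ (Icc (-1 : ℝ) 1).indicator (fun y => -log y) :=
  indicator_nonneg fun x hx => neg_nonneg.2 <| by
    rw [← log_abs]
    exact log_nonpos (abs_nonneg x) (abs_le.2 hx)

lemma integrable_indicator_neg_log : Integrable ((Icc (-1 : ℝ) 1).indicator (fun y => -log y)) :=
  (integrable_indicator_iff measurableSet_Icc).2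
    ((intervalIntegrable_iff_integrableOn_Icc_of_le (by norm_num)).1
      intervalIntegral.intervalIntegrable_log'.neg)

lemma integral_indicator_neg_log :
    ∫ x, (Icc (-1 : ℝ) 1).indicator (fun y => -log y) x = 2 := by
  rw [integral_indicator measurableSet_Icc, integral_Icc_eq_integral_Ioc,
    ← intervalIntegral.integral_of_le (by norm_num), intervalIntegral.integral_neg, integral_log]
  norm_num

lemma inv_sqrt_two_mul_pi_mul_two : (√(2 * π))⁻¹ * 2 = √(2 / π) := by
  rw [show 2 / π = 2 ^ 2 / (2 * π) by field_simp, sqrt_div' _ (by positivity),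
    sqrt_sq (by positivity)]
  ring

/-- For `Z` standard Gaussian and `X := max{|Z|, |Z|⁻¹}`,
`E[log log(eX)] ≤ √(8/π)`. -/
theorem loglog_expectation_bound :
    (∫ z, Real.log (Real.log (Real.exp 1 * max |z| |z|⁻¹)) ∂(gaussianReal 0 1))
      ≤ Real.sqrt (8 / π) := by
  set Q := (Icc (-1 : ℝ) 1).indicator (fun y => -log y)
  have hQ : Integrable Q (gaussianReal 0 1) :=
    integrable_gaussianReal_of_integrable integrable_indicator_neg_log 0 one_ne_zero
  have habs : Integrable (fun z => |z|) (gaussianReal 0 1) :=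
    ((memLp_id_gaussianReal 1).integrable le_rfl).abs
  have hpointwise (z : ℝ) : log (log (exp 1 * max |z| |z|⁻¹)) ≤ Q z + |z| := by
    refine (log_log_exp_one_mul_max_inv_le (abs_nonneg z)).trans ?_
    rw [log_abs]
    exact abs_log_le_indicator_neg_log_add_abs z
  calc ∫ z, log (log (exp 1 * max |z| |z|⁻¹)) ∂gaussianReal 0 1
      ≤ ∫ z, Q z + |z| ∂gaussianReal 0 1 :=
        integral_mono_of_nonneg
          (ae_of_all _ fun z => log_log_exp_one_mul_max_inv_nonneg (abs_nonneg z))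
          (hQ.add habs) (ae_of_all _ hpointwise)
    _ = ∫ z, Q z ∂gaussianReal 0 1 + ∫ z, |z| ∂gaussianReal 0 1 := integral_add hQ habs
    _ ≤ (√(2 * π))⁻¹ * 2 + √(2 / π) := by
        gcongr
        · simpa [integral_indicator_neg_log] using integral_gaussianReal_le_of_nonneg
            indicator_neg_log_nonneg integrable_indicator_neg_log 0 one_ne_zero
        · simpa using (integral_abs_gaussianReal_zero one_ne_zero).le
    _ = √(8 / π) := by
        rw [inv_sqrt_two_mul_pi_mul_two, show 8 / π = 2 ^ 2 * (2 / π) by ring,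
          sqrt_mul' _ (by positivity), sqrt_sq (by positivity)]
        ring
end
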